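/- arXiv:2212.04292 — 6 statements merged into one kernel-verified Lean document; each statement's English description precedes it below -/
import Mathlib

section
/- Let Y₁, ..., Y_N be i.i.d. nonnegative random variables with E[Y] = 1, and suppose E[Y^{1+θ}] < ∞ for some θ ∈ (0,1]. Then for all δ > 0 and all L ∈ ℝ with ln N ≥ L, writing t = ln N − L, the deviation probability satisfies P(|N^{-1} ∑ Yᵢ − 1| ≥ δ) ≤ (1/δ) e^{−t/4} + (2/δ) √(P_{η}(ln Y > L + t/2)), where P_η denotes the size-biased law of Y (i.e. the law with density Y with respect to the original law). -/
/-!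
Truncate each `Yᵢ` at `c = e^{L + t/2}`. The truncated summands lie in `[0, c]`, so their
variance is at most `c · E[Y] = c`, and the variance of their sample mean is at most
`c / N = e^{-t/2}`; by Cauchy–Schwarz the sample mean is within `e^{-t/4}` of its expectation
in `L¹`. The discarded parts `Yᵢ 1_{Yᵢ > c}` are nonnegative, so they move the sample mean and
its expectation by at most `2 E[Y; Y > c]` in `L¹`, and `E[Y; Y > c] = η(ln Y > L + t/2) ≤ 1`
is at most its square root. Markov's inequality turns the `L¹` bound into the tail bound.
-/

open MeasureTheory ProbabilityTheory Finset Set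

section SampleMean

variable {Ω : Type*}

noncomputable def sampleMean (X : ℕ → Ω → ℝ) (N : ℕ) (ω : Ω) : ℝ :=
  (N : ℝ)⁻¹ * ∑ i ∈ range N, X i ω

lemma sampleMean_add (X X' : ℕ → Ω → ℝ) (N : ℕ) (ω : Ω) :
    sampleMean (fun i => X i + X' i) N ω = sampleMean X N ω + sampleMean X' N ω := by
  simp only [sampleMean, Pi.add_apply, sum_add_distrib, mul_add]

lemma sampleMean_nonneg {X : ℕ → Ω → ℝ} (hX : ∀ i ω, 0 ≤ X i ω) (N : ℕ) (ω : Ω) :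
    0 ≤ sampleMean X N ω :=
  mul_nonneg (by positivity) (sum_nonneg fun i _ => hX i ω)

lemma sampleMean_eq_smul_sum (X : ℕ → Ω → ℝ) (N : ℕ) :
    sampleMean X N = (N : ℝ)⁻¹ • ∑ i ∈ range N, X i := by
  ext ω
  simp [sampleMean]

variable [MeasurableSpace Ω] {μ : Measure Ω}

lemma memLp_sampleMean {p : ENNReal} {X : ℕ → Ω → ℝ} (hX : ∀ i, MemLp (X i) p μ) (N : ℕ) :
    MemLp (sampleMean X N) p μ := by
  rw [sampleMean_eq_smul_sum]
  exact (memLp_finsetSum' _ fun i _ => hX i).const_smul _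

lemma integrable_sampleMean {X : ℕ → Ω → ℝ} (hX : ∀ i, Integrable (X i) μ) (N : ℕ) :
    Integrable (sampleMean X N) μ := by
  unfold sampleMean
  exact (integrable_finsetSum _ fun i _ => hX i).const_mul _

lemma integral_sampleMean {X : ℕ → Ω → ℝ} (hX : ∀ i, Integrable (X i) μ)
    (hident : ∀ i, IdentDistrib (X i) (X 0) μ μ) {N : ℕ} (hN : 0 < N) :
    ∫ ω, sampleMean X N ω ∂μ = ∫ ω, X 0 ω ∂μ := by
  simp only [sampleMean]
  rw [integral_const_mul, integral_finsetSum _ fun i _ => hX i]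
  simp only [(hident _).integral_eq, sum_const, card_range, nsmul_eq_mul]
  field_simp

lemma variance_sampleMean {X : ℕ → Ω → ℝ} (hX : ∀ i, MemLp (X i) 2 μ)
    (hindep : iIndepFun X μ) (hident : ∀ i, IdentDistrib (X i) (X 0) μ μ)
    {N : ℕ} (hN : 0 < N) :
    Var[sampleMean X N; μ] = Var[X 0; μ] / N := by
  rw [sampleMean_eq_smul_sum, variance_smul,
    IndepFun.variance_sum (fun i _ => hX i) fun i _ j _ hij => hindep.indepFun hij]
  simp only [(hident _).variance_eq, sum_const, card_range, nsmul_eq_mul]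
  field_simp

end SampleMean

section Variance

variable {Ω : Type*} [MeasurableSpace Ω] {μ : Measure Ω} [IsProbabilityMeasure μ]

lemma integral_abs_sub_integral_le_sqrt_variance {X : Ω → ℝ} (hX : MemLp X 2 μ) :
    ∫ ω, |X ω - μ[X]| ∂μ ≤ √(Var[X; μ]) := by
  set W : Ω → ℝ := fun ω => |X ω - μ[X]|
  have hW : MemLp W 2 μ := (hX.sub (memLp_const _)).abs
  have hW_sq : μ[W ^ 2] = Var[X; μ] := by
    rw [variance_eq_integral hX.aemeasurable]
    simp only [W, Pi.pow_apply, sq_abs]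
  -- `Var[W] ≥ 0` is the Cauchy–Schwarz inequality `(μ[W])² ≤ μ[W²]`.
  have h := variance_nonneg W μ
  rw [variance_eq_sub hW, hW_sq] at h
  exact Real.le_sqrt_of_sq_le (by linarith)

lemma variance_le_mul_integral {X : Ω → ℝ} {c : ℝ} (hm : AEStronglyMeasurable X μ)
    (h0 : ∀ ω, 0 ≤ X ω) (hc : ∀ ω, X ω ≤ c) :
    Var[X; μ] ≤ c * μ[X] := by
  have hX : MemLp X 2 μ :=
    MemLp.of_bound hm c (ae_of_all _ fun ω => by
      rw [Real.norm_eq_abs, abs_of_nonneg (h0 ω)]; exact hc ω)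
  calc Var[X; μ] ≤ μ[X ^ 2] := variance_le_expectation_sq hm
    _ ≤ μ[fun ω => c * X ω] :=
        integral_mono (f := X ^ 2) hX.integrable_sq ((hX.integrable one_le_two).const_mul c)
          fun ω => by simp only [Pi.pow_apply, sq]; exact mul_le_mul_of_nonneg_right (hc ω) (h0 ω)
    _ = c * μ[X] := integral_const_mul c _

end Variance

lemma setIntegral_lt_log_eq {Ω : Type*} [MeasurableSpace Ω] {μ : Measure Ω} {f : Ω → ℝ}
    (hf : Measurable f) (hnn : ∀ ω, 0 ≤ f ω) (a : ℝ) :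
    ∫ ω in {ω | a < Real.log (f ω)}, f ω ∂μ = ∫ ω in {ω | Real.exp a < f ω}, f ω ∂μ := by
  refine setIntegral_eq_of_subset_of_forall_sdiff_eq_zero
    (measurableSet_lt measurable_const (Real.measurable_log.comp hf)) (fun ω hω => ?_)
    fun ω ⟨hlog, hexp⟩ => ?_
  · exact (Real.lt_log_iff_exp_lt ((Real.exp_pos a).trans hω)).2 hω
  -- `Real.log 0 = 0`, so the left-hand set can be larger, but only where `f` vanishes.
  · refine ((hnn ω).eq_or_lt.resolve_right fun hpos => hexp ?_).symm
    exact (Real.lt_log_iff_exp_lt hpos).1 hlog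

section Truncation

variable {Ω : Type*} [MeasurableSpace Ω] {μ : Measure Ω} [IsProbabilityMeasure μ]

lemma integral_abs_sampleMean_sub_le_of_bounded {X : ℕ → Ω → ℝ} {c : ℝ}
    (h0 : ∀ i ω, 0 ≤ X i ω) (hc : ∀ i ω, X i ω ≤ c) (hindep : iIndepFun X μ)
    (hident : ∀ i, IdentDistrib (X i) (X 0) μ μ) {N : ℕ} (hN : 0 < N) :
    ∫ ω, |sampleMean X N ω - μ[X 0]| ∂μ ≤ √(c * μ[X 0] / N) := by
  have hm i : AEStronglyMeasurable (X i) μ := (hident i).aemeasurable_fst.aestronglyMeasurable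
  have hX i : MemLp (X i) 2 μ := MemLp.of_bound (hm i) c (ae_of_all _ fun ω => by
    rw [Real.norm_eq_abs, abs_of_nonneg (h0 i ω)]; exact hc i ω)
  have hmean := integral_sampleMean (fun i => (hX i).integrable one_le_two) hident hN
  calc ∫ ω, |sampleMean X N ω - μ[X 0]| ∂μ
      = ∫ ω, |sampleMean X N ω - μ[sampleMean X N]| ∂μ := by rw [hmean]
    _ ≤ √(Var[sampleMean X N; μ]) :=
        integral_abs_sub_integral_le_sqrt_variance (memLp_sampleMean hX N)
    _ = √(Var[X 0; μ] / N) := by rw [variance_sampleMean hX hindep hident hN]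
    _ ≤ √(c * μ[X 0] / N) := by
        gcongr
        exact variance_le_mul_integral (hm 0) (h0 0) (hc 0)

lemma integral_abs_sampleMean_add_sub_le {X T : ℕ → Ω → ℝ} (hX : ∀ i, Integrable (X i) μ)
    (hT : ∀ i, Integrable (T i) μ) (hT0 : ∀ i ω, 0 ≤ T i ω)
    (hidentT : ∀ i, IdentDistrib (T i) (T 0) μ μ) {N : ℕ} (hN : 0 < N) :
    ∫ ω, |sampleMean (fun i => X i + T i) N ω - (μ[X 0] + μ[T 0])| ∂μ
      ≤ ∫ ω, |sampleMean X N ω - μ[X 0]| ∂μ + 2 * μ[T 0] := by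
  have hXdev : Integrable (fun ω => |sampleMean X N ω - μ[X 0]|) μ :=
    ((integrable_sampleMean hX N).sub (integrable_const _)).abs
  have hbound : Integrable (fun ω => |sampleMean X N ω - μ[X 0]| + sampleMean T N ω) μ :=
    hXdev.add (integrable_sampleMean hT N)
  have hpointwise ω : |sampleMean (fun i => X i + T i) N ω - (μ[X 0] + μ[T 0])|
      ≤ |sampleMean X N ω - μ[X 0]| + sampleMean T N ω + μ[T 0] := by
    have hT0' : 0 ≤ μ[T 0] := integral_nonneg (hT0 0)
    have hTmean0 := sampleMean_nonneg hT0 N ω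
    rw [sampleMean_add, abs_le]
    constructor <;> linarith [le_abs_self (sampleMean X N ω - μ[X 0]),
      neg_abs_le (sampleMean X N ω - μ[X 0])]
  calc _ ≤ ∫ ω, (|sampleMean X N ω - μ[X 0]| + sampleMean T N ω + μ[T 0]) ∂μ :=
        integral_mono_of_nonneg (ae_of_all _ fun _ => abs_nonneg _)
          (hbound.add (integrable_const _)) (ae_of_all _ hpointwise)
    _ = ∫ ω, |sampleMean X N ω - μ[X 0]| ∂μ + 2 * μ[T 0] := by
        rw [integral_add hbound (integrable_const _),
          integral_add hXdev (integrable_sampleMean hT N),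
          integral_sampleMean hT hidentT hN, integral_const, probReal_univ, one_smul]
        ring

theorem integral_abs_sampleMean_sub_le_of_truncation {Y : ℕ → Ω → ℝ}
    (hnn : ∀ i ω, 0 ≤ Y i ω) (hindep : iIndepFun Y μ)
    (hident : ∀ i, IdentDistrib (Y i) (Y 0) μ μ) (hint : Integrable (Y 0) μ)
    {c : ℝ} (hc : 0 ≤ c) {N : ℕ} (hN : 0 < N) :
    ∫ ω, |sampleMean Y N ω - μ[Y 0]| ∂μ
      ≤ √(c * μ[Y 0] / N) + 2 * ∫ ω in {ω | c < Y 0 ω}, Y 0 ω ∂μ := by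
  set X : ℕ → Ω → ℝ := fun i => (Iic c).indicator id ∘ Y i
  set T : ℕ → Ω → ℝ := fun i => (Ioi c).indicator id ∘ Y i
  have hY : Y = fun i => X i + T i := by
    ext i ω
    simp only [X, T, Pi.add_apply, Function.comp_apply, ← compl_Iic,
      indicator_self_add_compl_apply, id]
  have hidentX i : IdentDistrib (X i) (X 0) μ μ :=
    (hident i).comp (measurable_id.indicator measurableSet_Iic)
  have hidentT i : IdentDistrib (T i) (T 0) μ μ :=
    (hident i).comp (measurable_id.indicator measurableSet_Ioi)
  have hX0 i ω : 0 ≤ X i ω := indicator_nonneg (fun _ _ => hnn i ω) _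
  have hXc i ω : X i ω ≤ c := by
    by_cases h : Y i ω ≤ c <;> simp [X, h, hc]
  have hT0 i ω : 0 ≤ T i ω := indicator_nonneg (fun _ _ => hnn i ω) _
  have hTY i ω : T i ω ≤ Y i ω := indicator_le_self' (fun _ _ => hnn i ω) _
  have hTint i : Integrable (T i) μ := (hidentT i).integrable_iff.2 <|
    hint.mono' (hidentT 0).aemeasurable_fst.aestronglyMeasurable
      (ae_of_all _ fun ω => by rw [Real.norm_eq_abs, abs_of_nonneg (hT0 0 ω)]; exact hTY 0 ω)
  have hXint i : Integrable (X i) μ :=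
    Integrable.of_bound (hidentX i).aemeasurable_fst.aestronglyMeasurable c (ae_of_all _ fun ω => by
      rw [Real.norm_eq_abs, abs_of_nonneg (hX0 i ω)]; exact hXc i ω)
  have hmean : μ[Y 0] = μ[X 0] + μ[T 0] := by
    rw [← integral_add (hXint 0) (hTint 0)]
    exact congrArg (fun Z : ℕ → Ω → ℝ => μ[Z 0]) hY
  have htail : μ[T 0] = ∫ ω in {ω | c < Y 0 ω}, Y 0 ω ∂μ :=
    integral_indicator₀ ((hident 0).aemeasurable_fst.nullMeasurableSet_preimage measurableSet_Ioi)
  have hXT : μ[X 0] ≤ μ[Y 0] := by linarith [(integral_nonneg (hT0 0) : (0 : ℝ) ≤ μ[T 0])]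
  calc ∫ ω, |sampleMean Y N ω - μ[Y 0]| ∂μ
      ≤ ∫ ω, |sampleMean X N ω - μ[X 0]| ∂μ + 2 * μ[T 0] := by
        rw [hmean, hY]
        exact integral_abs_sampleMean_add_sub_le hXint hTint hT0 hidentT hN
    _ ≤ √(c * μ[X 0] / N) + 2 * μ[T 0] := by
        gcongr
        exact integral_abs_sampleMean_sub_le_of_bounded hX0 hXc
          (hindep.comp _ fun _ => measurable_id.indicator measurableSet_Iic) hidentX hN
    _ ≤ √(c * μ[Y 0] / N) + 2 * ∫ ω in {ω | c < Y 0 ω}, Y 0 ω ∂μ := by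
        rw [htail]
        gcongr

theorem mul_measureReal_abs_sampleMean_sub_ge_le {Y : ℕ → Ω → ℝ} (hnn : ∀ i ω, 0 ≤ Y i ω)
    (hindep : iIndepFun Y μ) (hident : ∀ i, IdentDistrib (Y i) (Y 0) μ μ)
    (hint : Integrable (Y 0) μ) {c : ℝ} (hc : 0 ≤ c) {N : ℕ} (hN : 0 < N) (δ : ℝ) :
    δ * μ.real {ω | δ ≤ |sampleMean Y N ω - μ[Y 0]|}
      ≤ √(c * μ[Y 0] / N) + 2 * ∫ ω in {ω | c < Y 0 ω}, Y 0 ω ∂μ := by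
  have hdev : Integrable (fun ω => |sampleMean Y N ω - μ[Y 0]|) μ :=
    ((integrable_sampleMean (fun i => (hident i).integrable_iff.2 hint) N).sub
      (integrable_const _)).abs
  exact (mul_meas_ge_le_integral_of_nonneg (ae_of_all _ fun _ => abs_nonneg _) hdev δ).trans
    (integral_abs_sampleMean_sub_le_of_truncation hnn hindep hident hint hc hN)

end Truncation

theorem sample_size_deviation_bound_general {Ω : Type*} [MeasurableSpace Ω]
    (P : Measure Ω) [IsProbabilityMeasure P] (Y : ℕ → Ω → ℝ)
    (hmeas : ∀ i, Measurable (Y i)) (hnn : ∀ i ω, 0 ≤ Y i ω)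
    (hindep : ProbabilityTheory.iIndepFun Y P)
    (hident : ∀ i, P.map (Y i) = P.map (Y 0))
    (hint : Integrable (Y 0) P) (hmean : ∫ ω, Y 0 ω ∂P = 1)
    (N : ℕ) (hN : 0 < N) (δ : ℝ) (hδ : 0 < δ) (L : ℝ) :
    (P {ω | δ ≤ |(N : ℝ)⁻¹ * ∑ i ∈ Finset.range N, Y i ω - 1|}).toReal
      ≤ (1 / δ) * Real.exp (-(Real.log N - L) / 4)
        + (2 / δ) * Real.sqrt
            (∫ ω in {ω | L + (Real.log N - L) / 2 < Real.log (Y 0 ω)}, Y 0 ω ∂P) := by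
  set t := Real.log N - L
  set p := ∫ ω in {ω | L + t / 2 < Real.log (Y 0 ω)}, Y 0 ω ∂P
  have hident' i : IdentDistrib (Y i) (Y 0) P P :=
    ⟨(hmeas i).aemeasurable, (hmeas 0).aemeasurable, hident i⟩
  have hp : p = ∫ ω in {ω | Real.exp (L + t / 2) < Y 0 ω}, Y 0 ω ∂P :=
    setIntegral_lt_log_eq (hmeas 0) (hnn 0) _
  have hp_le_one : p ≤ 1 :=
    hmean ▸ setIntegral_le_integral hint (ae_of_all _ (hnn 0))
  have hscale : √(Real.exp (L + t / 2) * 1 / N) = Real.exp (-t / 4) := by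
    rw [mul_one, ← Real.exp_log (Nat.cast_pos.2 hN : (0 : ℝ) < N), ← Real.exp_sub,
      ← Real.exp_half]
    congr 1
    ring
  have hdev := mul_measureReal_abs_sampleMean_sub_ge_le hnn hindep hident' hint
    (Real.exp_pos (L + t / 2)).le hN δ
  rw [hmean, hscale, ← hp] at hdev
  have hbound : δ * (P {ω | δ ≤ |sampleMean Y N ω - 1|}).toReal ≤ Real.exp (-t / 4) + 2 * √p :=
    hdev.trans (by gcongr; exact Real.le_sqrt_self_iff.2 hp_le_one)
  calc _ ≤ (Real.exp (-t / 4) + 2 * √p) / δ := (le_div_iff₀' hδ).2 hbound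
    _ = _ := by ring

/-- Chatterjee–Diaconis deviation bound: for i.i.d. nonnegative `Y₁, …, Y_N` with mean `1`,
`E[Y^{1+θ}] < ∞` for some `θ ∈ (0,1]`, `δ > 0` and `L ≤ ln N` with `t = ln N - L`,
`P(|N⁻¹ ∑ Yᵢ - 1| ≥ δ) ≤ δ⁻¹ e^{-t/4} + 2 δ⁻¹ √(E[Y 1_{ln Y > L + t/2}])`,
where `E[Y 1_{ln Y > a}]` is the size-biased probability of `{ln Y > a}`. -/
theorem sample_size_deviation_bound {Ω : Type*} [MeasurableSpace Ω]
    (P : Measure Ω) [IsProbabilityMeasure P] (Y : ℕ → Ω → ℝ)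
    (hmeas : ∀ i, Measurable (Y i)) (hnn : ∀ i ω, 0 ≤ Y i ω)
    (hindep : ProbabilityTheory.iIndepFun Y P)
    (hident : ∀ i, P.map (Y i) = P.map (Y 0))
    (hint : Integrable (Y 0) P) (hmean : ∫ ω, Y 0 ω ∂P = 1)
    (θ : ℝ) (hθ0 : 0 < θ) (hθ1 : θ ≤ 1)
    (hmom : Integrable (fun ω => (Y 0 ω) ^ (1 + θ)) P)
    (N : ℕ) (hN : 0 < N) (δ : ℝ) (hδ : 0 < δ) (L : ℝ) (hL : L ≤ Real.log N) :
    (P {ω | δ ≤ |(N : ℝ)⁻¹ * ∑ i ∈ Finset.range N, Y i ω - 1|}).toReal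
      ≤ (1 / δ) * Real.exp (-(Real.log N - L) / 4)
        + (2 / δ) * Real.sqrt
            (∫ ω in {ω | L + (Real.log N - L) / 2 < Real.log (Y 0 ω)}, Y 0 ω ∂P) :=
  sample_size_deviation_bound_general P Y hmeas hnn hindep hident hint hmean N hN δ hδ L
end

section
/- Let Y ≥ 0 be a random variable with E[Y] = 1 and E[Y^{1-θ}] < ∞ for some θ ∈ (0,1), and let η be its size-biased law. Then for L = E[Y ln Y] (finite) and t ≥ 0, η(ln Y ≤ L − t/2) ≤ exp(θ(L − L_{1−θ}) − θ t/2), where L_{1−θ} = −(1/θ) ln E[Y^{1−θ}]. -/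
open MeasureTheory

/-- Chernoff-type lower-tail bound for the size-biased law: if `Y ≥ 0`, `E[Y] = 1`,
`E[Y^{1-θ}] < ∞` for `θ ∈ (0,1)`, `L = E[Y ln Y]` finite, then for `t ≥ 0`,
`E[Y 1_{ln Y ≤ L - t/2}] ≤ exp(θ (L - L_{1-θ}) - θ t / 2)` where
`L_{1-θ} = -(1/θ) ln E[Y^{1-θ}]`. -/
theorem chernoff_lower_size_biased {Ω : Type*} [MeasurableSpace Ω]
    (P : Measure Ω) [IsProbabilityMeasure P] (Y : Ω → ℝ)
    (hmeas : Measurable Y) (hnn : ∀ ω, 0 ≤ Y ω)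
    (hint : Integrable Y P) (hmean : ∫ ω, Y ω ∂P = 1)
    (θ : ℝ) (hθ0 : 0 < θ) (hθ1 : θ < 1)
    (hmom : Integrable (fun ω => Y ω ^ (1 - θ)) P)
    (hent : Integrable (fun ω => Y ω * Real.log (Y ω)) P)
    (L t : ℝ) (hL : L = ∫ ω, Y ω * Real.log (Y ω) ∂P) (ht : 0 ≤ t) :
    (∫ ω in {ω | Real.log (Y ω) ≤ L - t / 2}, Y ω ∂P)
      ≤ Real.exp (θ * (L - (-(1 / θ) * Real.log (∫ ω, Y ω ^ (1 - θ) ∂P))) - θ * t / 2) := by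
  set M : ℝ := ∫ ω, Y ω ^ (1 - θ) ∂P with hM
  have hθne : θ ≠ 0 := ne_of_gt hθ0
  have h1θ : (0:ℝ) < 1 - θ := by linarith
  have hMnn : 0 ≤ M := integral_nonneg fun ω => Real.rpow_nonneg (hnn ω) _
  have hMpos : 0 < M := by
    rcases hMnn.lt_or_eq with h | h
    · exact h
    · exfalso
      have h0 : (fun ω => Y ω ^ (1 - θ)) =ᵐ[P] 0 := by
        rw [← MeasureTheory.integral_eq_zero_iff_of_nonneg
          (fun ω => Real.rpow_nonneg (hnn ω) _) hmom]
        exact h.symm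
      have hY0 : Y =ᵐ[P] 0 := by
        filter_upwards [h0] with ω hω
        have : Y ω ^ (1 - θ) = 0 := hω
        rcases (hnn ω).lt_or_eq with hy | hy
        · exact absurd this (ne_of_gt (Real.rpow_pos_of_pos hy _))
        · exact hy.symm
      have : ∫ ω, Y ω ∂P = 0 := by
        rw [integral_congr_ae hY0]; simp
      rw [hmean] at this; norm_num at this
  set c : ℝ := Real.exp (θ * (L - t / 2)) with hc
  have hcpos : 0 < c := Real.exp_pos _
  set A : Set Ω := {ω | Real.log (Y ω) ≤ L - t / 2} with hA
  have hAmeas : MeasurableSet A :=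
    measurableSet_le (Real.measurable_log.comp hmeas) measurable_const
  -- pointwise bound on A
  have hpt : ∀ ω ∈ A, Y ω ≤ c * Y ω ^ (1 - θ) := by
    intro ω hω
    rcases (hnn ω).lt_or_eq with hy | hy
    · have hsplit : Y ω = Y ω ^ (1 - θ) * Y ω ^ θ := by
        rw [← Real.rpow_add hy]
        norm_num
      have hθpow : Y ω ^ θ ≤ c := by
        rw [Real.rpow_def_of_pos hy, hc]
        apply Real.exp_le_exp.mpr
        have : Real.log (Y ω) ≤ L - t / 2 := hω
        calc Real.log (Y ω) * θ ≤ (L - t / 2) * θ :=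
              mul_le_mul_of_nonneg_right this hθ0.le
          _ = θ * (L - t / 2) := mul_comm _ _
      calc Y ω = Y ω ^ (1 - θ) * Y ω ^ θ := hsplit
        _ ≤ Y ω ^ (1 - θ) * c :=
            mul_le_mul_of_nonneg_left hθpow (Real.rpow_nonneg hy.le _)
        _ = c * Y ω ^ (1 - θ) := mul_comm _ _
    · rw [← hy]
      have : ((0:ℝ)) ^ (1 - θ) = 0 := Real.zero_rpow (ne_of_gt h1θ)
      rw [this]; simp
  have step1 : (∫ ω in A, Y ω ∂P) ≤ ∫ ω in A, c * Y ω ^ (1 - θ) ∂P := by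
    apply setIntegral_mono_on hint.integrableOn (hmom.const_mul c).integrableOn hAmeas hpt
  have step2 : (∫ ω in A, c * Y ω ^ (1 - θ) ∂P) ≤ c * M := by
    rw [integral_const_mul]
    apply mul_le_mul_of_nonneg_left _ hcpos.le
    exact setIntegral_le_integral hmom
      (Filter.Eventually.of_forall fun ω => Real.rpow_nonneg (hnn ω) _)
  have hrhs : Real.exp (θ * (L - (-(1 / θ) * Real.log M)) - θ * t / 2) = c * M := by
    have : θ * (L - (-(1 / θ) * Real.log M)) - θ * t / 2
        = θ * (L - t / 2) + Real.log M := by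
      field_simp
      ring
    rw [this, Real.exp_add, Real.exp_log hMpos, hc]
  rw [hrhs]
  exact step1.trans step2
end

section
/- Let π ∈ P(E), let C ⊂ P(E) be convex, and let μ* ∈ C satisfy the Pythagorean inequality: Ent(η | π) ≥ Ent(η | μ*) + Ent(μ* | π) for all η ∈ C. Then μ* minimizes over all probability measures μ ∈ P(E) the quantity sup_{η ∈ C} [Ent(η | μ) − Ent(η | π)], and the minimum value equals −Ent(μ* | π), attained in the inner supremum at η = μ*. -/
/-! The Pythagorean inequality bounds the cost `Ent(η|μ*) - Ent(η|π)` of every `η ∈ C` by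
`-Ent(μ*|π)`, with equality at `η = μ*`. Conversely, for an arbitrary proposal `μ` the choice
`η = μ*` already costs `Ent(μ*|μ) - Ent(μ*|π) ≥ -Ent(μ*|π)`, by Gibbs' inequality. -/

open MeasureTheory

/-- Relative entropy `Ent(η | μ) = ∫ ln (dη/dμ) dη`. -/
noncomputable def Ent {E : Type*} [MeasurableSpace E] (η μ : Measure E) : ℝ :=
  ∫ x, Real.log ((η.rnDeriv μ) x).toReal ∂η

section RelativeEntropy

variable {E : Type*} [MeasurableSpace E]

lemma Ent_eq_toReal_klDiv {η μ : Measure E} [IsFiniteMeasure η] [IsFiniteMeasure μ]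
    (hημ : η ≪ μ) (hmass : η Set.univ = μ Set.univ) :
    Ent η μ = (InformationTheory.klDiv η μ).toReal :=
  (InformationTheory.toReal_klDiv_of_measure_eq hημ hmass).symm

lemma Ent_nonneg {η μ : Measure E} [IsProbabilityMeasure η] [IsProbabilityMeasure μ]
    (hημ : η ≪ μ) : 0 ≤ Ent η μ := by
  rw [Ent_eq_toReal_klDiv hημ (by simp)]
  exact ENNReal.toReal_nonneg

lemma Ent_self (μ : Measure E) [SigmaFinite μ] : Ent μ μ = 0 :=
  (integral_congr_ae (llr_self μ)).trans (integral_zero' E ℝ)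

end RelativeEntropy

theorem minmax_pythagorean_general {E : Type*} [MeasurableSpace E]
    (π : Measure E)
    (C : Set (Measure E))
    (μs : Measure E) [IsProbabilityMeasure μs] (hμsC : μs ∈ C) (hμsac : μs ≪ π)
    (hμsfin : Integrable (fun x => Real.log ((μs.rnDeriv π) x).toReal) μs)
    (hPyth : ∀ η ∈ C, η ≪ π → η ≪ μs →
      Integrable (fun x => Real.log ((η.rnDeriv π) x).toReal) η →
      Integrable (fun x => Real.log ((η.rnDeriv μs) x).toReal) η →
      Ent η π ≥ Ent η μs + Ent μs π) :
    -- (i) for the proposal `μ*`, the relative log-cost of any admissible `η` is at most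
    -- `-Ent(μ*|π)` :
    (∀ η ∈ C, η ≪ π → η ≪ μs →
      Integrable (fun x => Real.log ((η.rnDeriv π) x).toReal) η →
      Integrable (fun x => Real.log ((η.rnDeriv μs) x).toReal) η →
      Ent η μs - Ent η π ≤ -Ent μs π) ∧
    -- (ii) the bound is attained in the inner supremum at `η = μ*` :
    (Ent μs μs - Ent μs π = -Ent μs π) ∧
    -- (iii) for every proposal `μ`, the worst relative log-cost is at least `-Ent(μ*|π)` :
    (∀ μ : Measure E, IsProbabilityMeasure μ → μs ≪ μ →
      Integrable (fun x => Real.log ((μs.rnDeriv μ) x).toReal) μs →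
      ∃ η ∈ C, (η ≪ π ∧ η ≪ μ ∧
        Integrable (fun x => Real.log ((η.rnDeriv π) x).toReal) η ∧
        Integrable (fun x => Real.log ((η.rnDeriv μ) x).toReal) η) ∧
        -Ent μs π ≤ Ent η μ - Ent η π) := by
  refine ⟨?upper, ?attained, ?lower⟩
  case upper =>
    intro η hηC hηπ hημs hintπ hintμs
    linarith [hPyth η hηC hηπ hημs hintπ hintμs]
  case attained => rw [Ent_self, zero_sub]
  case lower =>
    intro μ _ hμsμ hintμ
    refine ⟨μs, hμsC, ⟨hμsac, hμsμ, hμsfin, hintμ⟩, ?_⟩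
    linarith [Ent_nonneg hμsμ]

/-- Min-max reformulation of the Pythagorean theorem: if `μ* ∈ C` satisfies the Pythagorean
inequality `Ent(η|π) ≥ Ent(η|μ*) + Ent(μ*|π)` on the convex class `C`, then `μ*` minimizes
`μ ↦ sup_{η ∈ C} [Ent(η|μ) - Ent(η|π)]` over all probability measures: the supremum for
`μ = μ*` is at most `-Ent(μ*|π)`, this value is attained at `η = μ*`, and for any proposal
`μ` the supremum is at least `-Ent(μ*|π)` (witnessed by some `η ∈ C`). -/
theorem minmax_pythagorean {E : Type*} [MeasurableSpace E] [StandardBorelSpace E]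
    (π : Measure E) [IsProbabilityMeasure π]
    (C : Set (Measure E))
    (hCprob : ∀ η ∈ C, IsProbabilityMeasure η)
    (hconv : ∀ η₁ ∈ C, ∀ η₂ ∈ C, ∀ a b : ENNReal, a + b = 1 → a • η₁ + b • η₂ ∈ C)
    (μs : Measure E) [IsProbabilityMeasure μs] (hμsC : μs ∈ C) (hμsac : μs ≪ π)
    (hμsfin : Integrable (fun x => Real.log ((μs.rnDeriv π) x).toReal) μs)
    (hPyth : ∀ η ∈ C, η ≪ π → η ≪ μs →
      Integrable (fun x => Real.log ((η.rnDeriv π) x).toReal) η →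
      Integrable (fun x => Real.log ((η.rnDeriv μs) x).toReal) η →
      Ent η π ≥ Ent η μs + Ent μs π) :
    -- (i) for the proposal `μ*`, the relative log-cost of any admissible `η` is at most
    -- `-Ent(μ*|π)` :
    (∀ η ∈ C, η ≪ π → η ≪ μs →
      Integrable (fun x => Real.log ((η.rnDeriv π) x).toReal) η →
      Integrable (fun x => Real.log ((η.rnDeriv μs) x).toReal) η →
      Ent η μs - Ent η π ≤ -Ent μs π) ∧
    -- (ii) the bound is attained in the inner supremum at `η = μ*` :
    (Ent μs μs - Ent μs π = -Ent μs π) ∧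
    -- (iii) for every proposal `μ`, the worst relative log-cost is at least `-Ent(μ*|π)` :
    (∀ μ : Measure E, IsProbabilityMeasure μ → μs ≪ μ →
      Integrable (fun x => Real.log ((μs.rnDeriv μ) x).toReal) μs →
      ∃ η ∈ C, (η ≪ π ∧ η ≪ μ ∧
        Integrable (fun x => Real.log ((η.rnDeriv π) x).toReal) η ∧
        Integrable (fun x => Real.log ((η.rnDeriv μ) x).toReal) η) ∧
        -Ent μs π ≤ Ent η μ - Ent η π) :=
  minmax_pythagorean_general π C μs hμsC hμsac hμsfin hPyth
end

section
/- Chain rule of conditional relative entropy: let T : E → F be measurable between standard Borel spaces and let μ, π be probability measures on E with μ ≪ π. Then Ent(μ | π) = Ent(T♯μ | T♯π) + ∫_F Ent(μ(· | T = t) | π(· | T = t)) d(T♯μ)(t), where μ(· | T = t) and π(· | T = t) denote regular conditional distributions given T. -/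
/-!
The graph map `x ↦ (T x, x)` has the measurable left inverse `Prod.snd`, so it preserves relative
entropy, and it pushes `μ` forward to the composition product `T♯μ ⊗ μ(· | T)`. For composition
products the Radon-Nikodym derivative factors as
`d(μ ⊗ κ)/d(ν ⊗ η) (a, b) = dμ/dν (a) · dκ(a)/dη(a) (b)`; taking logarithms and integrating gives
`Ent(μ ⊗ κ | ν ⊗ η) = Ent(μ | ν) + ∫ Ent(κ a | η a) dμ(a)`.
-/

open MeasureTheory ProbabilityTheory

open Function InformationTheory

lemma ent_eq_integral_llr {α : Type*} [MeasurableSpace α] (μ ν : Measure α) :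
    Ent μ ν = ∫ x, llr μ ν x ∂μ := rfl

section LeftInverse

variable {α β : Type*} [MeasurableSpace α] [MeasurableSpace β] {f : α → β} {g : β → α}
  {μ ν : Measure α} [SigmaFinite μ] [IsFiniteMeasure ν]

lemma map_eq_withDensity_rnDeriv_comp_of_leftInverse (hf : Measurable f) (hg : Measurable g)
    (hgf : LeftInverse g f) (hμν : μ ≪ ν) :
    μ.map f = (ν.map f).withDensity (μ.rnDeriv ν ∘ g) := by
  ext s hs
  rw [Measure.map_apply hf hs, withDensity_apply _ hs,
    setLIntegral_map hs ((Measure.measurable_rnDeriv μ ν).comp hg) hf]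
  simp only [comp_apply, hgf _]
  exact (Measure.setLIntegral_rnDeriv hμν _).symm

lemma llr_map_comp_ae_eq_of_leftInverse (hf : Measurable f) (hg : Measurable g)
    (hgf : LeftInverse g f) (hμν : μ ≪ ν) :
    (fun x ↦ llr (μ.map f) (ν.map f) (f x)) =ᵐ[μ] llr μ ν := by
  have hrn : (μ.map f).rnDeriv (ν.map f) =ᵐ[ν.map f] μ.rnDeriv ν ∘ g := by
    rw [map_eq_withDensity_rnDeriv_comp_of_leftInverse hf hg hgf hμν]
    exact Measure.rnDeriv_withDensity _ ((Measure.measurable_rnDeriv μ ν).comp hg)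
  filter_upwards [hμν.ae_le (ae_of_ae_map hf.aemeasurable hrn)] with x hx
  simp only [llr_def, hx, comp_apply, hgf x]

lemma ent_map_of_leftInverse (hf : Measurable f) (hg : Measurable g) (hgf : LeftInverse g f)
    (hμν : μ ≪ ν) : Ent (μ.map f) (ν.map f) = Ent μ ν := by
  rw [ent_eq_integral_llr, integral_map hf.aemeasurable (measurable_llr _ _).aestronglyMeasurable,
    integral_congr_ae (llr_map_comp_ae_eq_of_leftInverse hf hg hgf hμν), ent_eq_integral_llr]

lemma integrable_llr_map_iff_of_leftInverse (hf : Measurable f) (hg : Measurable g)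
    (hgf : LeftInverse g f) (hμν : μ ≪ ν) :
    Integrable (llr (μ.map f) (ν.map f)) (μ.map f) ↔ Integrable (llr μ ν) μ := by
  rw [integrable_map_measure (measurable_llr _ _).aestronglyMeasurable hf.aemeasurable]
  exact integrable_congr (llr_map_comp_ae_eq_of_leftInverse hf hg hgf hμν)

end LeftInverse

section CompProd

variable {α β : Type*} [MeasurableSpace α] [MeasurableSpace β]
  [MeasurableSpace.CountableOrCountablyGenerated α β] {μ ν : Measure α} {κ η : Kernel α β}

lemma rnDeriv_compProd_right_ae_eq [IsFiniteMeasure μ] [IsFiniteKernel κ] [IsFiniteKernel η]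
    (hκη : ∀ᵐ a ∂μ, κ a ≪ η a) :
    (μ ⊗ₘ κ).rnDeriv (μ ⊗ₘ η) =ᵐ[μ ⊗ₘ η] fun p ↦ κ.rnDeriv η p.1 p.2 := by
  have hκ_eq : κ =ᵐ[μ] η.withDensity (κ.rnDeriv η) := by
    filter_upwards [hκη] with a ha using (Kernel.withDensity_rnDeriv_eq ha).symm
  rw [Measure.compProd_congr hκ_eq, Measure.compProd_withDensity (by fun_prop)]
  exact Measure.rnDeriv_withDensity _ (by fun_prop)

lemma ent_compProd_right [IsFiniteMeasure μ] [IsFiniteKernel κ] [IsFiniteKernel η]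
    (hκη : ∀ᵐ a ∂μ, κ a ≪ η a) (h_int : Integrable (llr (μ ⊗ₘ κ) (μ ⊗ₘ η)) (μ ⊗ₘ κ)) :
    Ent (μ ⊗ₘ κ) (μ ⊗ₘ η) = ∫ a, Ent (κ a) (η a) ∂μ := by
  have h_llr :
      llr (μ ⊗ₘ κ) (μ ⊗ₘ η) =ᵐ[μ ⊗ₘ κ] fun p ↦ Real.log (κ.rnDeriv η p.1 p.2).toReal := by
    filter_upwards [(Measure.AbsolutelyContinuous.compProd_right hκη).ae_le
      (rnDeriv_compProd_right_ae_eq hκη)] with p hp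
    rw [llr, hp]
  rw [ent_eq_integral_llr, integral_congr_ae h_llr,
    Measure.integral_compProd ((integrable_congr h_llr).mp h_int)]
  refine integral_congr_ae ?_
  filter_upwards [hκη] with a ha
  refine integral_congr_ae ?_
  filter_upwards [ha.ae_le (Kernel.rnDeriv_eq_rnDeriv_measure (κ := κ) (η := η) (a := a))]
    with b hb
  rw [hb]

theorem ent_compProd [IsFiniteMeasure μ] [IsFiniteMeasure ν] [IsMarkovKernel κ] [IsMarkovKernel η]
    (h_ac : μ ⊗ₘ κ ≪ ν ⊗ₘ η) (h_int : Integrable (llr (μ ⊗ₘ κ) (ν ⊗ₘ η)) (μ ⊗ₘ κ)) :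
    Ent (μ ⊗ₘ κ) (ν ⊗ₘ η) = Ent μ ν + ∫ a, Ent (κ a) (η a) ∂μ := by
  rw [← ent_compProd_right h_ac.kernel_of_compProd ((integrable_llr_compProd_iff h_ac).mp h_int).2]
  exact integral_llr_compProd_eq_add h_ac h_int

end CompProd

theorem chain_rule_conditional_entropy_general {E F : Type*}
    [MeasurableSpace E] [StandardBorelSpace E] [Nonempty E] [MeasurableSpace F]
    (T : E → F) (hT : Measurable T)
    (μ π : Measure E) [IsProbabilityMeasure μ] [IsProbabilityMeasure π]
    (hac : μ ≪ π)
    (h1 : Integrable (fun x => Real.log ((μ.rnDeriv π) x).toReal) μ) :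
    Ent μ π = Ent (μ.map T) (π.map T)
      + ∫ t, Ent ((condDistrib id T μ) t) ((condDistrib id T π) t) ∂(μ.map T) := by
  have hgraph : Measurable fun x ↦ (T x, x) := hT.prodMk measurable_id
  have hinv : LeftInverse Prod.snd fun x ↦ (T x, x) := fun _ ↦ rfl
  have hmap (ρ : Measure E) [IsProbabilityMeasure ρ] :
      ρ.map (fun x ↦ (T x, x)) = ρ.map T ⊗ₘ condDistrib id T ρ :=
    (compProd_map_condDistrib aemeasurable_id).symm
  have h_ac := hac.map hgraph
  have h_int := (integrable_llr_map_iff_of_leftInverse hgraph measurable_snd hinv hac).mpr h1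
  rw [hmap μ, hmap π] at h_ac h_int
  rw [← ent_map_of_leftInverse hgraph measurable_snd hinv hac, hmap μ, hmap π]
  exact ent_compProd h_ac h_int

/-- Chain rule of conditional relative entropy:
`Ent(μ|π) = Ent(T♯μ | T♯π) + ∫ Ent(μ(·|T=t) | π(·|T=t)) d(T♯μ)(t)`,
where the conditional distributions are the regular conditional distributions
`condDistrib id T μ` and `condDistrib id T π`. -/
theorem chain_rule_conditional_entropy {E F : Type*}
    [MeasurableSpace E] [StandardBorelSpace E] [Nonempty E] [MeasurableSpace F]
    (T : E → F) (hT : Measurable T)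
    (μ π : Measure E) [IsProbabilityMeasure μ] [IsProbabilityMeasure π]
    (hac : μ ≪ π)
    (h1 : Integrable (fun x => Real.log ((μ.rnDeriv π) x).toReal) μ)
    (h2 : Integrable (fun x => Real.log (((μ.map T).rnDeriv (π.map T)) x).toReal) (μ.map T))
    (h3 : Integrable
      (fun t => Ent ((condDistrib id T μ) t) ((condDistrib id T π) t)) (μ.map T)) :
    Ent μ π = Ent (μ.map T) (π.map T)
      + ∫ t, Ent ((condDistrib id T μ) t) ((condDistrib id T π) t) ∂(μ.map T) :=
  chain_rule_conditional_entropy_general T hT μ π hac h1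
end

section
/- Let π ∈ P(E), μ* ∈ P(E) with μ* ≪ π, let h* = Ent(μ* | π) < ∞ and h ≥ h*. Let A ⊂ E be measurable with μ*(A) = e^{h* − h} > 0, and suppose moreover that conditional on T the measure behaves uniformly: π(A | T = t) = e^{h*−h} for T♯π-a.e. t and μ*(·|T=t) = π(·|T=t). Define η(dx) = e^{h−h*} 1_A(x) μ*(dx). Then η is a probability measure, T♯η = T♯μ*, and Ent(η | π) = h. -/
/-!
Since `μ*` and `π` have the same conditional laws given `T`, the density `dμ*/dπ` is
`g ∘ T` with `g = d(T♯μ*)/d(T♯π)`. Every fibre of `T` gives `A` the same `μ*`-mass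
`e^{h* - h}`, so rescaling `μ*|_A` by `e^{h - h*}` leaves `T♯μ*` unchanged. Then
`log (dη/dπ) = (h - h*) + log g ∘ T` on `A`, and because `η` and `μ*` have the same push-forward
the integral of `log g ∘ T` against `η` equals its integral against `μ*`, which is `h*`.
-/

open MeasureTheory ProbabilityTheory

open scoped ENNReal

section CondDistrib

variable {α β Ω : Type*} [MeasurableSpace α] [MeasurableSpace β] [MeasurableSpace Ω]
  [StandardBorelSpace Ω] [Nonempty Ω] {X : α → β} {Y : α → Ω} {μ : Measure α} [IsFiniteMeasure μ]

lemma lintegral_mul_condDistrib (hX : Measurable X) (hY : Measurable Y) {f : β → ℝ≥0∞}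
    (hf : Measurable f) {s : Set Ω} (hs : MeasurableSet s) :
    ∫⁻ b, f b * condDistrib Y X μ b s ∂(μ.map X) = ∫⁻ a in Y ⁻¹' s, f (X a) ∂μ := by
  have hf₁ : Measurable fun p : β × Ω => f p.1 := hf.comp measurable_fst
  calc ∫⁻ b, f b * condDistrib Y X μ b s ∂(μ.map X)
      = ∫⁻ p in Set.univ ×ˢ s, f p.1 ∂(μ.map X ⊗ₘ condDistrib Y X μ) := by
        simp [Measure.setLIntegral_compProd hf₁ MeasurableSet.univ hs]
    _ = ∫⁻ a in Y ⁻¹' s, f (X a) ∂μ := by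
        rw [compProd_map_condDistrib hY.aemeasurable,
          setLIntegral_map (MeasurableSet.univ.prod hs) hf₁ (hX.prodMk hY)]
        simp [Set.preimage]

lemma map_restrict_eq_smul_of_condDistrib_ae_eq (hX : Measurable X) (hY : Measurable Y)
    {s : Set Ω} (hs : MeasurableSet s) {c : ℝ≥0∞}
    (hc : ∀ᵐ b ∂(μ.map X), condDistrib Y X μ b s = c) :
    (μ.restrict (Y ⁻¹' s)).map X = c • μ.map X := by
  ext t ht
  rw [Measure.map_apply hX ht, Measure.restrict_apply (hX ht), Measure.smul_apply,
    Measure.map_apply hX ht, smul_eq_mul,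
    ← setLIntegral_preimage_condDistrib hX hY.aemeasurable hs ht,
    setLIntegral_congr_fun_ae (hX ht) ((ae_of_ae_map hX.aemeasurable hc).mono fun _ h _ => h),
    setLIntegral_const]

lemma map_eq_map_withDensity_of_condDistrib_ae_eq (hX : Measurable X) (hY : Measurable Y)
    {ν : Measure α} [IsFiniteMeasure ν] (hμν : μ ≪ ν)
    (hcond : ∀ᵐ b ∂(ν.map X), condDistrib Y X μ b = condDistrib Y X ν b) :
    μ.map Y = (ν.withDensity fun a => (μ.map X).rnDeriv (ν.map X) (X a)).map Y := by
  set g := (μ.map X).rnDeriv (ν.map X)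
  have hg : Measurable g := Measure.measurable_rnDeriv _ _
  have hμνX : μ.map X ≪ ν.map X := hμν.map hX
  ext s hs
  rw [Measure.map_apply hY hs, Measure.map_apply hY hs, withDensity_apply _ (hY hs)]
  calc μ (Y ⁻¹' s) = ∫⁻ a in Y ⁻¹' s, 1 ∂μ := by simp
    _ = ∫⁻ b, 1 * condDistrib Y X μ b s ∂(μ.map X) :=
        (lintegral_mul_condDistrib hX hY measurable_const hs).symm
    _ = ∫⁻ b, condDistrib Y X ν b s ∂((ν.map X).withDensity g) := by
        rw [Measure.withDensity_rnDeriv_eq _ _ hμνX]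
        exact lintegral_congr_ae ((hcond.filter_mono hμνX.ae_le).mono fun b hb => by simp [hb])
    _ = ∫⁻ a in Y ⁻¹' s, g (X a) ∂ν := by
        rw [lintegral_withDensity_eq_lintegral_mul _ hg (Kernel.measurable_coe _ hs)]
        exact lintegral_mul_condDistrib hX hY hg hs

lemma rnDeriv_ae_eq_rnDeriv_map_comp_of_condDistrib_ae_eq [StandardBorelSpace α] [Nonempty α]
    (hX : Measurable X) {ν : Measure α} [IsFiniteMeasure ν] (hμν : μ ≪ ν)
    (hcond : ∀ᵐ b ∂(ν.map X), condDistrib id X μ b = condDistrib id X ν b) :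
    μ.rnDeriv ν =ᵐ[ν] fun a => (μ.map X).rnDeriv (ν.map X) (X a) := by
  have hfac := map_eq_map_withDensity_of_condDistrib_ae_eq hX measurable_id hμν hcond
  rw [Measure.map_id, Measure.map_id] at hfac
  nth_rw 1 [hfac]
  exact Measure.rnDeriv_withDensity ν ((Measure.measurable_rnDeriv _ _).comp hX)

end CondDistrib

section Entropy

variable {E F : Type*} [MeasurableSpace E] [MeasurableSpace F]

lemma Ent_smul_restrict {π μ : Measure E} [SigmaFinite π] [IsFiniteMeasure μ] (hμπ : μ ≪ π)
    (hint : Integrable (fun x => Real.log (μ.rnDeriv π x).toReal) μ) {r : ℝ} (hr : 0 < r)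
    {A : Set E} (hA : MeasurableSet A) :
    Ent (ENNReal.ofReal r • μ.restrict A) π
      = (ENNReal.ofReal r • μ.restrict A).real Set.univ * Real.log r
        + ∫ x, Real.log (μ.rnDeriv π x).toReal ∂(ENNReal.ofReal r • μ.restrict A) := by
  set η := ENNReal.ofReal r • μ.restrict A
  have hημ : η ≪ μ := (Measure.absolutelyContinuous_of_le Measure.restrict_le_self).smul_left _
  have hrn : η.rnDeriv π =ᵐ[π] fun x => ENNReal.ofReal r * A.indicator (μ.rnDeriv π) x := by
    filter_upwards [Measure.rnDeriv_smul_left_of_ne_top (μ.restrict A) π ENNReal.ofReal_ne_top,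
      Measure.rnDeriv_restrict μ π hA] with x hsmul hres
    rw [hsmul, Pi.smul_apply, hres, smul_eq_mul]
  have hlog : (fun x => Real.log (η.rnDeriv π x).toReal)
      =ᵐ[η] fun x => Real.log r + Real.log (μ.rnDeriv π x).toReal := by
    have hA_ae : ∀ᵐ x ∂η, x ∈ A := Measure.ae_smul_measure (ae_restrict_mem hA) _
    filter_upwards [hA_ae, hrn.filter_mono (hημ.trans hμπ).ae_le,
      hημ.ae_le (Measure.rnDeriv_pos hμπ), hημ.ae_le (hμπ.ae_le (Measure.rnDeriv_lt_top μ π))]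
      with x hxA hx hpos hfin
    rw [hx, Set.indicator_of_mem hxA, ENNReal.toReal_mul, ENNReal.toReal_ofReal hr.le,
      Real.log_mul hr.ne' (ENNReal.toReal_pos hpos.ne' hfin.ne).ne']
  have hintη : Integrable (fun x => Real.log (μ.rnDeriv π x).toReal) η :=
    hint.restrict.smul_measure ENNReal.ofReal_ne_top
  have : IsFiniteMeasure η := Measure.smul_finite _ ENNReal.ofReal_ne_top
  rw [Ent, integral_congr_ae hlog, integral_add (integrable_const _) hintη, integral_const,
    smul_eq_mul]

lemma integral_eq_of_map_eq_of_ae_eq_comp {μ ν : Measure E} {T : E → F} (hT : Measurable T)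
    (hνμ : ν ≪ μ) (hmap : ν.map T = μ.map T) {f : E → ℝ} {ψ : F → ℝ}
    (hψ : AEStronglyMeasurable ψ (μ.map T)) (hf : f =ᵐ[μ] ψ ∘ T) :
    ∫ x, f x ∂ν = ∫ x, f x ∂μ := by
  rw [integral_congr_ae (hνμ.ae_le hf), integral_congr_ae hf]
  simp only [Function.comp_def]
  rw [← integral_map hT.aemeasurable hψ, ← hmap, integral_map hT.aemeasurable (hmap ▸ hψ)]

end Entropy

theorem conditioned_minimizer_entropy_general {E F : Type*}
    [MeasurableSpace E] [StandardBorelSpace E] [Nonempty E] [MeasurableSpace F]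
    (T : E → F) (hT : Measurable T)
    (π μs : Measure E) [IsProbabilityMeasure π] [IsProbabilityMeasure μs]
    (hac : μs ≪ π)
    (hfin : Integrable (fun x => Real.log ((μs.rnDeriv π) x).toReal) μs)
    (hstar h : ℝ) (hEnt : Ent μs π = hstar)
    (A : Set E) (hAmeas : MeasurableSet A)
    (hcondA : ∀ᵐ t ∂(π.map T), (condDistrib id T π) t A = ENNReal.ofReal (Real.exp (hstar - h)))
    (hcondEq : ∀ᵐ t ∂(π.map T), (condDistrib id T μs) t = (condDistrib id T π) t) :
    ∀ η : Measure E, η = (ENNReal.ofReal (Real.exp (h - hstar))) • μs.restrict A →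
      IsProbabilityMeasure η ∧ η.map T = μs.map T ∧ Ent η π = h := by
  intro η hη
  have hmapac : μs.map T ≪ π.map T := hac.map hT
  have hres : (μs.restrict A).map T = ENNReal.ofReal (Real.exp (hstar - h)) • μs.map T := by
    refine map_restrict_eq_smul_of_condDistrib_ae_eq hT measurable_id hAmeas ?_
    filter_upwards [hmapac.ae_le hcondEq, hmapac.ae_le hcondA] with t hμπ hπ
    rw [hμπ, hπ]
  have hmap : η.map T = μs.map T := by
    rw [hη, Measure.map_smul, hres, smul_smul, ← ENNReal.ofReal_mul (Real.exp_pos _).le,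
      ← Real.exp_add]
    simp
  have hprob : IsProbabilityMeasure η :=
    ⟨by simpa [Measure.map_apply hT .univ] using congrArg (· Set.univ) hmap⟩
  have hψ : Measurable fun t => Real.log ((μs.map T).rnDeriv (π.map T) t).toReal :=
    Real.measurable_log.comp (Measure.measurable_rnDeriv _ _).ennreal_toReal
  have hlog : ∫ x, Real.log (μs.rnDeriv π x).toReal ∂η = Ent μs π :=
    integral_eq_of_map_eq_of_ae_eq_comp hT
      (hη ▸ (Measure.absolutelyContinuous_of_le Measure.restrict_le_self).smul_left _) hmap
      hψ.aestronglyMeasurable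
      (((rnDeriv_ae_eq_rnDeriv_map_comp_of_condDistrib_ae_eq hT hac hcondEq).filter_mono
        hac.ae_le).fun_comp fun y => Real.log y.toReal)
  refine ⟨hprob, hmap, ?_⟩
  rw [hη, Ent_smul_restrict hac hfin (Real.exp_pos _) hAmeas, ← hη, probReal_univ, hlog, hEnt,
    Real.log_exp]
  ring

/-- Conditioning the entropy minimizer `μ*` to a set `A` of uniform conditional
`π`-probability `e^{h* - h}` yields a target `η = e^{h - h*} 1_A μ*` which is a probability
measure, has the same push-forward by `T`, and satisfies `Ent(η | π) = h`. -/
theorem conditioned_minimizer_entropy {E F : Type*}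
    [MeasurableSpace E] [StandardBorelSpace E] [Nonempty E] [MeasurableSpace F]
    (T : E → F) (hT : Measurable T)
    (π μs : Measure E) [IsProbabilityMeasure π] [IsProbabilityMeasure μs]
    (hac : μs ≪ π)
    (hfin : Integrable (fun x => Real.log ((μs.rnDeriv π) x).toReal) μs)
    (hstar h : ℝ) (hEnt : Ent μs π = hstar) (hh : hstar ≤ h)
    (A : Set E) (hAmeas : MeasurableSet A)
    (hAmass : μs A = ENNReal.ofReal (Real.exp (hstar - h)))
    (hcondA : ∀ᵐ t ∂(π.map T), (condDistrib id T π) t A = ENNReal.ofReal (Real.exp (hstar - h)))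
    (hcondEq : ∀ᵐ t ∂(π.map T), (condDistrib id T μs) t = (condDistrib id T π) t) :
    ∀ η : Measure E, η = (ENNReal.ofReal (Real.exp (h - hstar))) • μs.restrict A →
      IsProbabilityMeasure η ∧ η.map T = μs.map T ∧ Ent η π = h :=
  conditioned_minimizer_entropy_general T hT π μs hac hfin hstar h hEnt A hAmeas hcondA hcondEq
end

section
/- Two-point space, small h: Let E = {1, 2} and π a probability on E with π(1) ≥ π(2) > 0. For h ≤ −ln π(1), define WLC_h(μ | π) = sup{Ent(η | μ) : η ∈ P(E), Ent(η | π) ≤ h}. Then π is a minimizer of μ ↦ WLC_h(μ | π) over P(E). -/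
/-- A probability vector on the two-point space `{1,2}`, identified with a pair. -/
def prob2 (η : ℝ × ℝ) : Prop := 0 ≤ η.1 ∧ 0 ≤ η.2 ∧ η.1 + η.2 = 1

/-- Relative entropy on the two-point space, with conventions `0 ln 0 = 0` and value `+∞`
when `η(i) > 0 = μ(i)`. -/
noncomputable def ent2 (η μ : ℝ × ℝ) : EReal :=
  (if η.1 = 0 then (0 : EReal) else if μ.1 = 0 then ⊤
    else ((η.1 * Real.log (η.1 / μ.1) : ℝ) : EReal)) +
  (if η.2 = 0 then (0 : EReal) else if μ.2 = 0 then ⊤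
    else ((η.2 * Real.log (η.2 / μ.2) : ℝ) : EReal))

/-- The worst-case log-cost `WLC_h(μ | π) = sup {Ent(η|μ) : η ∈ P(E), Ent(η|π) ≤ h}`. -/
noncomputable def WLC (h : ℝ) (μ pr : ℝ × ℝ) : EReal :=
  sSup {e : EReal | ∃ η : ℝ × ℝ, prob2 η ∧ ent2 η pr ≤ (h : EReal) ∧ e = ent2 η μ}

/-- Real-valued two-point entropy along the segment `t ↦ (t, 1-t)`. -/
noncomputable def G2 (q1 q2 t : ℝ) : ℝ :=
  t * Real.log t - t * Real.log q1 + (1 - t) * Real.log (1 - t) - (1 - t) * Real.log q2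

lemma xlog_ge (x p : ℝ) (hx : 0 ≤ x) (hp : 0 < p) :
    x - p ≤ x * (Real.log x - Real.log p) := by
  rcases eq_or_lt_of_le hx with h | h
  · rw [← h]; simp; linarith
  · have hlog : Real.log (p / x) ≤ p / x - 1 := Real.log_le_sub_one_of_pos (by positivity)
    rw [Real.log_div (ne_of_gt hp) (ne_of_gt h)] at hlog
    have h1 : x * (Real.log p - Real.log x) ≤ x * (p / x - 1) :=
      mul_le_mul_of_nonneg_left hlog h.le
    have h2 : x * (p / x - 1) = p - x := by field_simp
    nlinarith

lemma ent2_eval (q : ℝ × ℝ) (hq1 : 0 < q.1) (hq2 : 0 < q.2) (t : ℝ) :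
    ent2 (t, 1 - t) q = ((G2 q.1 q.2 t : ℝ) : EReal) := by
  unfold ent2 G2
  by_cases h0 : t = 0
  · subst h0
    simp [hq1.ne', hq2.ne', Real.log_div one_ne_zero hq2.ne', Real.log_one]
  · by_cases h1 : (1 : ℝ) - t = 0
    · have ht1 : t = 1 := by linarith
      subst ht1
      simp [hq1.ne', hq2.ne', Real.log_div one_ne_zero hq1.ne', Real.log_one]
    · simp only [h0, h1, if_false, hq1.ne', hq2.ne']
      rw [← EReal.coe_add]
      rw [Real.log_div h0 hq1.ne', Real.log_div h1 hq2.ne']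
      norm_cast
      ring

lemma ent2_nonneg (q : ℝ × ℝ) (hq1 : 0 < q.1) (hq2 : 0 < q.2) (hqs : q.1 + q.2 = 1)
    (η : ℝ × ℝ) (hη : prob2 η) : (0 : EReal) ≤ ent2 η q := by
  obtain ⟨ha, hb, hs⟩ := hη
  have hη2 : η = (η.1, 1 - η.1) := Prod.ext rfl (by simp; linarith)
  rw [hη2, ent2_eval q hq1 hq2]
  have g1 := xlog_ge η.1 q.1 ha hq1
  have g2 := xlog_ge (1 - η.1) q.2 (by linarith) hq2
  have : (0 : ℝ) ≤ G2 q.1 q.2 η.1 := by unfold G2; nlinarith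
  exact_mod_cast this

lemma ent2_top_left (η μ : ℝ × ℝ) (h1 : η.1 ≠ 0) (hm : μ.1 = 0) : ent2 η μ = ⊤ := by
  unfold ent2
  rw [if_neg h1, if_pos hm]
  refine EReal.top_add_of_ne_bot ?_
  split_ifs
  · simp
  · simp
  · exact EReal.coe_ne_bot _

lemma ent2_top_right (η μ : ℝ × ℝ) (h2 : η.2 ≠ 0) (hm : μ.2 = 0) : ent2 η μ = ⊤ := by
  unfold ent2
  rw [if_neg h2, if_pos hm]
  refine EReal.add_top_of_ne_bot ?_
  split_ifs
  · simp
  · simp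
  · exact EReal.coe_ne_bot _

/-- Two-point space, small `h`: for `π(1) ≥ π(2) > 0` and `h ≤ -ln π(1)`, the reference `π`
minimizes `μ ↦ WLC_h(μ | π)` over probability measures on `{1,2}`. -/
theorem two_point_small_h (pr : ℝ × ℝ) (hp : prob2 pr)
    (h2 : 0 < pr.2) (h12 : pr.2 ≤ pr.1)
    (h : ℝ) (hh : h ≤ -Real.log pr.1) :
    ∀ μ : ℝ × ℝ, prob2 μ → WLC h pr pr ≤ WLC h μ pr := by
  obtain ⟨hp1, hp2, hsum⟩ := hp
  have hp1pos : 0 < pr.1 := lt_of_lt_of_le h2 h12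
  intro μ hμ
  have hle : WLC h pr pr ≤ (h : EReal) := by
    apply sSup_le
    rintro e ⟨η, hη, hent, rfl⟩
    exact hent
  by_cases hh0 : 0 ≤ h
  · -- nontrivial case: find feasible η with ent2 η μ ≥ h
    obtain ⟨hμ1, hμ2, hμsum⟩ := hμ
    have hpr2 : pr.2 = 1 - pr.1 := by linarith
    -- continuity of G2
    have hGcont : Continuous (G2 pr.1 pr.2) := by
      unfold G2
      have hml : Continuous fun t : ℝ => t * Real.log t := Real.continuous_mul_log
      have hml2 : Continuous fun t : ℝ => (1 - t) * Real.log (1 - t) :=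
        hml.comp (continuous_const.sub continuous_id)
      fun_prop
    have hGp : G2 pr.1 pr.2 pr.1 = 0 := by
      unfold G2; rw [show (1 : ℝ) - pr.1 = pr.2 by linarith]; ring
    have hG1 : G2 pr.1 pr.2 1 = -Real.log pr.1 := by
      unfold G2; simp
    have hG0 : G2 pr.1 pr.2 0 = -Real.log pr.2 := by
      unfold G2; simp
    have hlog12 : -Real.log pr.1 ≤ -Real.log pr.2 := by
      have := Real.log_le_log h2 h12
      linarith
    -- IVT on [pr.1, 1]
    have hiv1 : h ∈ Set.Icc (G2 pr.1 pr.2 pr.1) (G2 pr.1 pr.2 1) := by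
      rw [hGp, hG1]; exact ⟨hh0, hh⟩
    obtain ⟨t, htmem, htval⟩ :=
      intermediate_value_Icc (by linarith : pr.1 ≤ 1) hGcont.continuousOn hiv1
    -- IVT on [0, pr.1] (decreasing orientation)
    have hiv2 : h ∈ Set.Icc (G2 pr.1 pr.2 pr.1) (G2 pr.1 pr.2 0) := by
      rw [hGp, hG0]; exact ⟨hh0, by linarith⟩
    obtain ⟨s, hsmem, hsval⟩ :=
      intermediate_value_Icc' (by linarith : (0:ℝ) ≤ pr.1) hGcont.continuousOn hiv2
    have ht0 : 0 ≤ t := le_trans hp1pos.le htmem.1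
    have ht1 : t ≤ 1 := htmem.2
    have hs0 : 0 ≤ s := hsmem.1
    have hs1 : s ≤ pr.1 := hsmem.2
    -- feasibility of both candidates
    have probt : prob2 (t, 1 - t) := ⟨ht0, by simp; linarith, by simp⟩
    have probs : prob2 (s, 1 - s) := ⟨hs0, by simp; linarith, by simp⟩
    have entt : ent2 (t, 1 - t) pr = ((h : ℝ) : EReal) := by
      rw [ent2_eval pr hp1pos h2, htval]
    have ents : ent2 (s, 1 - s) pr = ((h : ℝ) : EReal) := by
      rw [ent2_eval pr hp1pos h2, hsval]
    -- choose a candidate η with ent2 η μ ≥ h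
    have key : ∃ η : ℝ × ℝ, prob2 η ∧ ent2 η pr ≤ (h : EReal) ∧ (h : EReal) ≤ ent2 η μ := by
      by_cases hm1 : μ.1 = 0
      · refine ⟨(t, 1 - t), probt, le_of_eq entt, ?_⟩
        have htpos : (t, 1 - t).1 ≠ 0 := ne_of_gt (lt_of_lt_of_le hp1pos htmem.1)
        rw [ent2_top_left _ _ htpos hm1]; exact le_top
      · by_cases hm2 : μ.2 = 0
        · refine ⟨(s, 1 - s), probs, le_of_eq ents, ?_⟩
          have hspos : (s, 1 - s).2 ≠ 0 := by
            show (1 : ℝ) - s ≠ 0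
            have hs' : s < 1 := lt_of_le_of_lt hs1 (by linarith)
            exact ne_of_gt (by linarith)
          rw [ent2_top_right _ _ hspos hm2]; exact le_top
        · have hμ1pos : 0 < μ.1 := lt_of_le_of_ne hμ1 (Ne.symm hm1)
          have hμ2pos : 0 < μ.2 := lt_of_le_of_ne hμ2 (Ne.symm hm2)
          set c1 := Real.log pr.1 - Real.log μ.1 with hc1
          set c2 := Real.log pr.2 - Real.log μ.2 with hc2
          have hgibbs : 0 ≤ pr.1 * c1 + pr.2 * c2 := by
            have g1 := xlog_ge pr.1 μ.1 hp1 hμ1pos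
            have g2 := xlog_ge pr.2 μ.2 hp2 hμ2pos
            rw [hc1, hc2]; nlinarith
          have hdiff : ∀ u : ℝ, G2 μ.1 μ.2 u = G2 pr.1 pr.2 u + (u * c1 + (1 - u) * c2) := by
            intro u; unfold G2; rw [hc1, hc2]; ring
          by_cases hc : c2 ≤ c1
          · refine ⟨(t, 1 - t), probt, le_of_eq entt, ?_⟩
            rw [ent2_eval μ hμ1pos hμ2pos]
            have hL : 0 ≤ t * c1 + (1 - t) * c2 := by
              have hexp : t * c1 + (1 - t) * c2
                  = pr.1 * c1 + pr.2 * c2 + (t - pr.1) * (c1 - c2) := by rw [hpr2]; ring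
              linarith [hgibbs, mul_nonneg (sub_nonneg.mpr htmem.1) (sub_nonneg.mpr hc), hexp]
            have : h ≤ G2 μ.1 μ.2 t := by rw [hdiff, htval]; linarith
            exact_mod_cast this
          · refine ⟨(s, 1 - s), probs, le_of_eq ents, ?_⟩
            rw [ent2_eval μ hμ1pos hμ2pos]
            have hL : 0 ≤ s * c1 + (1 - s) * c2 := by
              have hexp : s * c1 + (1 - s) * c2
                  = pr.1 * c1 + pr.2 * c2 + (pr.1 - s) * (c2 - c1) := by rw [hpr2]; ring
              linarith [hgibbs, mul_nonneg (sub_nonneg.mpr hs1)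
                (sub_nonneg.mpr (not_le.mp hc).le), hexp]
            have : h ≤ G2 μ.1 μ.2 s := by rw [hdiff, hsval]; linarith
            exact_mod_cast this
    obtain ⟨η, hηprob, hηpr, hημ⟩ := key
    calc WLC h pr pr ≤ ((h : ℝ) : EReal) := hle
      _ ≤ ent2 η μ := hημ
      _ ≤ WLC h μ pr := le_sSup ⟨η, hηprob, hηpr, rfl⟩
  · -- h < 0 : feasible set is empty
    have hempty : {e : EReal | ∃ η : ℝ × ℝ, prob2 η ∧ ent2 η pr ≤ (h : EReal) ∧ e = ent2 η pr} = ∅ := by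
      ext e
      simp only [Set.mem_setOf_eq, Set.mem_empty_iff_false, iff_false]
      rintro ⟨η, hη, hent, rfl⟩
      have hge := ent2_nonneg pr (lt_of_lt_of_le h2 h12) h2 hsum η hη
      have : ((h : ℝ) : EReal) < 0 := by exact_mod_cast not_le.mp hh0
      exact absurd (le_trans hge hent) (not_le.mpr this)
    rw [WLC, hempty, sSup_empty]
    exact bot_le
end
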